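/- arXiv:2507.02823 — 3 statements merged into one kernel-verified Lean document; each statement's English description precedes it below -/
import Mathlib

section
/- For the degree-d Veronese embedding of ℙ^1 with the Bombieri–Weyl metric, the k-th order distance degree equals k(d-k+1) for all 1 ≤ k ≤ d. Equivalently: the coefficient of h₁ h₂^{k-1} in the expansion of (-1)^k Σ_{j≥0} (-1)^j (d·h₁ + h₂ + k·h₁h₂)^j in ℤ[h₁,h₂]/⟨h₁², h₂^{d+1}⟩ equals k(d-k+1), for 1 ≤ k ≤ d. -/
/-!
Write the series argument as `h₂ + h₁ q` with `q = d + k h₂`. Modulo `h₁²`,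
`(h₂ + h₁ q) ^ j = h₂ ^ j + j h₂ ^ (j - 1) h₁ q`, so only `j = k` (contributing `d k`) and
`j = k - 1` (contributing `k (k - 1)`) reach the monomial `h₁ h₂ ^ (k - 1)`, and with the signs
the coefficient is `d k - k (k - 1) = k (d - k + 1)`.
-/

open MvPolynomial Finset

namespace MvPolynomial

variable {R σ : Type*} [CommRing R] [DecidableEq σ]

theorem coeff_single_X_mul_of_ne {i j : σ} (hij : i ≠ j) (m : ℕ) (g : MvPolynomial σ R) :
    coeff (Finsupp.single j m) (X i * g) = 0 := by
  rw [coeff_X_mul', if_neg]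
  simp [hij]

theorem coeff_single_one_add_single_X_pow_of_ne {i j : σ} (hij : i ≠ j) (m n : ℕ) :
    coeff (Finsupp.single i 1 + Finsupp.single j m) (X j ^ n : MvPolynomial σ R) = 0 := by
  rw [coeff_X_pow, if_neg]
  intro h
  simpa [Finsupp.single_apply, hij] using DFunLike.congr_fun h i

theorem coeff_single_one_add_single_X_add_X_mul_pow {i j : σ} (hij : i ≠ j)
    (q : MvPolynomial σ R) (m n : ℕ) :
    coeff (Finsupp.single i 1 + Finsupp.single j m) ((X j + X i * q) ^ (n + 1)) =
      ((n : R) + 1) * coeff (Finsupp.single j m) (X j ^ n * q) := by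
  obtain ⟨r, hr⟩ := sq_dvd_add_pow_sub_sub (X i * q) (X j) (n + 1)
  have expand : (X j + X i * q) ^ (n + 1) =
      X i * (C ((n : R) + 1) * (X j ^ n * q) + X i * (q ^ 2 * r)) + X j ^ (n + 1) := by
    rw [sub_sub, sub_eq_iff_eq_add] at hr
    rw [hr, Nat.add_sub_cancel]
    simp only [map_add, map_natCast, map_one, Nat.cast_add, Nat.cast_one]
    ring
  rw [expand, coeff_add, coeff_X_mul, coeff_add, coeff_C_mul, coeff_single_X_mul_of_ne hij,
    coeff_single_one_add_single_X_pow_of_ne hij, add_zero, add_zero]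

theorem coeff_single_zero_one_add_single_one_pow (a b : R) (m j : ℕ) :
    coeff (Finsupp.single 0 1 + Finsupp.single 1 m)
        ((C a * X 0 + X 1 + C b * X 0 * X 1 : MvPolynomial (Fin 2) R) ^ j) =
      (if j = m + 1 then (j : R) * a else 0) + (if j = m then (j : R) * b else 0) := by
  rcases j with - | n
  · rw [pow_zero, coeff_one, if_neg]
    · simp
    · intro h
      simpa using DFunLike.congr_fun h 0
  · have hp : (C a * X 0 + X 1 + C b * X 0 * X 1 : MvPolynomial (Fin 2) R) =
        X 1 + X 0 * (C a + C b * X 1) := by ring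
    have hq : (X 1 ^ n * (C a + C b * X 1) : MvPolynomial (Fin 2) R) =
        C a * X 1 ^ n + C b * X 1 ^ (n + 1) := by ring
    rw [hp, coeff_single_one_add_single_X_add_X_mul_pow (by decide), hq, coeff_add, coeff_C_mul,
      coeff_C_mul, coeff_X_pow, coeff_X_pow]
    simp only [(Finsupp.single_injective _).eq_iff, Nat.cast_succ, Nat.add_right_cancel_iff,
      mul_one, mul_add, mul_ite, mul_zero]

end MvPolynomial

theorem dd_k_veronese_P1_BW_general (d k : ℕ) (h1 : 1 ≤ k) :
    (-1 : ℤ) ^ k *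
      coeff (Finsupp.single (0 : Fin 2) 1 + Finsupp.single (1 : Fin 2) (k - 1))
        (∑ j ∈ range (d + k + 2),
          (-1 : MvPolynomial (Fin 2) ℤ) ^ j *
            (C (d : ℤ) * X 0 + X 1 + C (k : ℤ) * X 0 * X 1) ^ j)
      = (k : ℤ) * ((d : ℤ) - (k : ℤ) + 1) := by
  obtain ⟨m, rfl⟩ : ∃ m, k = m + 1 := ⟨k - 1, by omega⟩
  simp_rw [Nat.add_sub_cancel, coeff_sum, show (-1 : MvPolynomial (Fin 2) ℤ) = C (-1) by simp,
    ← map_pow, coeff_C_mul, coeff_single_zero_one_add_single_one_pow, mul_add, mul_ite, mul_zero,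
    sum_add_distrib, sum_ite_eq', mem_range]
  rw [if_pos (by omega), if_pos (by omega), pow_succ]
  have hsq : ((-1 : ℤ) ^ m) ^ 2 = 1 := by rw [← pow_mul, pow_mul', neg_one_sq, one_pow]
  push_cast
  linear_combination ((m + 1 : ℤ) * d - m * (m + 1)) * hsq

/-- For `1 ≤ k ≤ d`, the coefficient of `h₁ h₂^{k-1}` in the expansion of
`(-1)^k ∑_{j≥0} (-1)^j (d h₁ + h₂ + k h₁ h₂)^j` in `ℤ[h₁,h₂]/⟨h₁², h₂^{d+1}⟩`
equals `k(d-k+1)`. (The series is truncated at a bound beyond which no term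
contributes to this coefficient.) -/
theorem dd_k_veronese_P1_BW (d k : ℕ) (h1 : 1 ≤ k) (hk : k ≤ d) :
    (-1 : ℤ) ^ k *
      coeff (Finsupp.single (0 : Fin 2) 1 + Finsupp.single (1 : Fin 2) (k - 1))
        (∑ j ∈ range (d + k + 2),
          (-1 : MvPolynomial (Fin 2) ℤ) ^ j *
            (C (d : ℤ) * X 0 + X 1 + C (k : ℤ) * X 0 * X 1) ^ j)
      = (k : ℤ) * ((d : ℤ) - (k : ℤ) + 1) :=
  dd_k_veronese_P1_BW_general d k h1
end

section
/- For 1 ≤ k ≤ d, the coefficient of h₁² h₂^{S-3} (where S = binom(k+2,2)) in the expansion of (-1)^{S-1} Σ_{j≥0} (-1)^j (d h₁ + h₂ + k(d-k) h₁² + k h₁h₂)^j in ℤ[h₁,h₂]/⟨h₁³, h₂^{binom(d+2,2)}⟩ equals ((d-k)²/2)·S² − ((d-k)(3d-5k)/2)·S + (d-2k)². -/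
/-!
With `a = k` and `b = d - k`, the polynomial factors as
`1 + (d h₁ + h₂ + k(d-k) h₁² + k h₁h₂) = (1 + a h₁)(1 + b h₁ + h₂)`.
Modulo the `N`-th power of the ideal of the variables, a truncated geometric series
`∑_{j<N} (-p)^j` is the inverse of `1 + p`, so the alternating series of the statement agrees
in degrees `< N` with the product of the series of the two factors. In that product the
coefficient of `h₁² h₂^q` is `(-1)^q (binom(q+2,2) b² + (q+1) a b + a²)`, which for
`q = S - 3` is the claimed quadratic in `S`.
-/

open MvPolynomial Finset

section GeomSum

variable {A : Type*} [CommRing A] {I : Ideal A}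

theorem Ideal.Quotient.mk_one_add_mul_sum_neg_pow {p : A} (hp : p ∈ I) (n : ℕ) :
    Ideal.Quotient.mk (I ^ n) ((1 + p) * ∑ j ∈ range n, (-p) ^ j) = 1 := by
  rw [← sub_neg_eq_add, mul_neg_geom_sum, map_sub, map_one,
    Ideal.Quotient.eq_zero_iff_mem.2 (Ideal.pow_mem_pow (I.neg_mem_iff.2 hp) n), sub_zero]

theorem Ideal.sum_neg_pow_sub_mul_mem_pow {p q r : A} (hp : p ∈ I) (hq : q ∈ I)
    (h : (1 + p) * (1 + q) = 1 + r) (n : ℕ) :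
    ∑ j ∈ range n, (-r) ^ j - (∑ j ∈ range n, (-p) ^ j) * ∑ j ∈ range n, (-q) ^ j ∈ I ^ n := by
  have hr : r ∈ I := by
    rw [show r = p + q + p * q by linear_combination -h]
    exact I.add_mem (I.add_mem hp hq) (I.mul_mem_right q hp)
  rw [← Ideal.Quotient.eq, map_mul]
  refine left_inv_eq_right_inv (a := Ideal.Quotient.mk (I ^ n) (1 + r)) ?_ ?_
  · rw [← map_mul, mul_comm, Ideal.Quotient.mk_one_add_mul_sum_neg_pow hr]
  · rw [← h, map_mul, mul_mul_mul_comm, ← map_mul, ← map_mul,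
      Ideal.Quotient.mk_one_add_mul_sum_neg_pow hp, Ideal.Quotient.mk_one_add_mul_sum_neg_pow hq,
      one_mul]

end GeomSum

theorem Finsupp.single_add_single_eq_iff {σ : Type*} {i j : σ} (hij : i ≠ j) {p q p' q' : ℕ} :
    single i p + single j q = single i p' + single j q' ↔ p = p' ∧ q = q' := by
  refine ⟨fun h => ⟨?_, ?_⟩, by rintro ⟨rfl, rfl⟩; rfl⟩
  · simpa [hij] using DFunLike.congr_fun h i
  · simpa [hij.symm] using DFunLike.congr_fun h j

namespace MvPolynomial

variable {σ R : Type*} {i j : σ}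

section CommSemiring

variable [CommSemiring R]

theorem coeff_add_pow_C_mul_X (hij : i ≠ j) (c e : R) (p q n : ℕ) :
    coeff (Finsupp.single i p + Finsupp.single j q) ((C c * X i + C e * X j) ^ n) =
      if p + q = n then (n.choose p : R) * c ^ p * e ^ q else 0 := by
  classical
  have hterm (t : ℕ) :
      (C c * X i) ^ t * (C e * X j) ^ (n - t) * (n.choose t : MvPolynomial σ R) =
        monomial (Finsupp.single i t + Finsupp.single j (n - t))
          ((n.choose t : R) * c ^ t * e ^ (n - t)) := by
    rw [← monomial_mul, ← C_mul_X_pow_eq_monomial, ← C_mul_X_pow_eq_monomial, map_mul,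
      map_natCast, C_pow, C_pow]
    ring
  simp_rw [add_pow, coeff_sum, hterm, coeff_monomial, Finsupp.single_add_single_eq_iff hij]
  split_ifs with h
  · rw [sum_eq_single_of_mem p (mem_range.2 (by omega)) fun t _ ht => if_neg fun h => ht h.1,
      if_pos ⟨rfl, by omega⟩, ← h, Nat.add_sub_cancel_left]
  · refine sum_eq_zero fun t ht => if_neg ?_
    rintro ⟨rfl, rfl⟩
    exact h (Nat.add_sub_of_le (Nat.lt_succ_iff.1 (mem_range.1 ht)))

theorem coeff_sum_pow_C_mul_X_mul (hij : i ≠ j) (c : R) (g : MvPolynomial σ R) {p q n : ℕ}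
    (hpn : p < n) :
    coeff (Finsupp.single i p + Finsupp.single j q) ((∑ t ∈ range n, (C c * X i) ^ t) * g) =
      ∑ t ∈ range (p + 1), c ^ t * coeff (Finsupp.single i (p - t) + Finsupp.single j q) g := by
  classical
  simp_rw [sum_mul, coeff_sum, mul_pow, ← C_pow, mul_assoc, coeff_C_mul, X_pow_eq_monomial,
    coeff_monomial_mul']
  rw [← sum_subset (range_subset_range.2 (by omega : p + 1 ≤ n))]
  · refine sum_congr rfl fun t ht => ?_
    have hsplit : Finsupp.single i p + Finsupp.single j q =
        Finsupp.single i t + (Finsupp.single i (p - t) + Finsupp.single j q) := by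
      rw [← add_assoc, ← Finsupp.single_add,
        Nat.add_sub_cancel' (Nat.lt_succ_iff.1 (mem_range.1 ht))]
    rw [hsplit, if_pos le_self_add, one_mul, add_tsub_cancel_left]
  · intro t _ ht
    have hti (hle : Finsupp.single i t ≤ Finsupp.single i p + Finsupp.single j q) : t ≤ p := by
      simpa [hij] using hle i
    rw [if_neg fun hle => ht (mem_range.2 (Nat.lt_succ_of_le (hti hle))), mul_zero]

end CommSemiring

variable [CommRing R]

theorem coeff_eq_of_sub_mem_pow_idealOfVars {f g : MvPolynomial σ R} {n : ℕ}
    (h : f - g ∈ idealOfVars σ R ^ n) {m : σ →₀ ℕ} (hm : m.degree < n) :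
    coeff m f = coeff m g := by
  rw [← sub_eq_zero, ← coeff_sub]
  exact (mem_pow_idealOfVars_iff' n _).1 h m hm

theorem coeff_sum_neg_pow_C_mul_X_add_X (hij : i ≠ j) (b : R) {p q n : ℕ} (h : p + q < n) :
    coeff (Finsupp.single i p + Finsupp.single j q) (∑ t ∈ range n, (-(C b * X i + X j)) ^ t) =
      (-1) ^ (p + q) * ((p + q).choose p : R) * b ^ p := by
  have hneg : -(C b * X i + X j) = C (-b) * X i + C (-1) * X j := by
    rw [map_neg, map_neg, map_one]
    ring
  simp_rw [hneg, coeff_sum, coeff_add_pow_C_mul_X hij]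
  rw [sum_ite_eq (range n) (p + q), if_pos (mem_range.2 h), neg_pow b, pow_add]
  ring

theorem coeff_sum_neg_pow_mul_sum_neg_pow (hij : i ≠ j) (a b : R) {q n : ℕ} (h : q + 2 < n) :
    coeff (Finsupp.single i 2 + Finsupp.single j q)
        ((∑ t ∈ range n, (-(C a * X i)) ^ t) * ∑ t ∈ range n, (-(C b * X i + X j)) ^ t) =
      (-1) ^ q * (((q + 2).choose 2 : R) * b ^ 2 + (q + 1) * a * b + a ^ 2) := by
  simp_rw [← neg_mul, ← map_neg]
  rw [coeff_sum_pow_C_mul_X_mul hij _ _ (by omega)]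
  simp only [sum_range_succ, sum_range_zero]
  rw [Nat.sub_zero, Nat.sub_self, coeff_sum_neg_pow_C_mul_X_add_X hij b (by omega),
    coeff_sum_neg_pow_C_mul_X_add_X hij b (by omega),
    coeff_sum_neg_pow_C_mul_X_add_X hij b (by omega),
    add_comm 2 q, Nat.choose_one_right, Nat.choose_zero_right, pow_add, pow_add]
  push_cast
  ring

end MvPolynomial

theorem dd_k_veronese_P2_BW_general (d k : ℕ) (h1 : 1 ≤ k) :
    (((-1 : ℤ) ^ (Nat.choose (k + 2) 2 - 1) *
      coeff (Finsupp.single (0 : Fin 2) 2 +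
          Finsupp.single (1 : Fin 2) (Nat.choose (k + 2) 2 - 3))
        (∑ j ∈ range (Nat.choose (k + 2) 2 + Nat.choose (d + 2) 2),
          (-1 : MvPolynomial (Fin 2) ℤ) ^ j *
            (C (d : ℤ) * X 0 + X 1 + C ((k : ℤ) * ((d : ℤ) - (k : ℤ))) * X 0 ^ 2 +
              C (k : ℤ) * X 0 * X 1) ^ j) : ℤ) : ℚ)
      = ((d : ℚ) - k) ^ 2 / 2 * (Nat.choose (k + 2) 2 : ℚ) ^ 2
        - ((d : ℚ) - k) * (3 * (d : ℚ) - 5 * k) / 2 * (Nat.choose (k + 2) 2 : ℚ)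
        + ((d : ℚ) - 2 * k) ^ 2 := by
  obtain ⟨q, hS⟩ : ∃ q, (k + 2).choose 2 = q + 3 :=
    Nat.exists_eq_add_of_le' (Nat.choose_le_choose 2 (show 3 ≤ k + 2 by omega))
  have hfactor : (1 + C (k : ℤ) * X 0) * (1 + (C ((d : ℤ) - k) * X 0 + X 1)) =
      1 + (C (d : ℤ) * X 0 + X 1 + C ((k : ℤ) * ((d : ℤ) - (k : ℤ))) * X 0 ^ 2 +
        C (k : ℤ) * X 0 * X 1 : MvPolynomial (Fin 2) ℤ) := by
    rw [map_mul, map_sub]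
    ring
  have hx : C (k : ℤ) * X 0 ∈ idealOfVars (Fin 2) ℤ :=
    Ideal.mul_mem_left _ _ (Ideal.subset_span ⟨0, rfl⟩)
  have hW : C ((d : ℤ) - k) * X 0 + X 1 ∈ idealOfVars (Fin 2) ℤ :=
    add_mem (Ideal.mul_mem_left _ _ (Ideal.subset_span ⟨0, rfl⟩)) (Ideal.subset_span ⟨1, rfl⟩)
  simp_rw [← neg_pow]
  rw [hS, coeff_eq_of_sub_mem_pow_idealOfVars (Ideal.sum_neg_pow_sub_mul_mem_pow hx hW hfactor _)
      (by simp only [map_add, Finsupp.degree_single]; omega),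
    coeff_sum_neg_pow_mul_sum_neg_pow (by decide) _ _ (by omega),
    show q + 3 - 1 = q + 2 by omega, Nat.add_sub_cancel, ← mul_assoc, ← pow_add,
    Even.neg_one_pow ⟨q + 1, by ring⟩, one_mul]
  push_cast [Nat.cast_choose_two]
  ring

/-- For `1 ≤ k ≤ d` and `S = binom(k+2,2)`, the coefficient of `h₁² h₂^{S-3}` in the
expansion of `(-1)^{S-1} ∑_{j≥0} (-1)^j (d h₁ + h₂ + k(d-k) h₁² + k h₁h₂)^j`
in `ℤ[h₁,h₂]/⟨h₁³, h₂^{binom(d+2,2)}⟩` equals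
`((d-k)²/2) S² − ((d-k)(3d-5k)/2) S + (d-2k)²`. -/
theorem dd_k_veronese_P2_BW (d k : ℕ) (h1 : 1 ≤ k) (hk : k ≤ d) :
    (((-1 : ℤ) ^ (Nat.choose (k + 2) 2 - 1) *
      coeff (Finsupp.single (0 : Fin 2) 2 +
          Finsupp.single (1 : Fin 2) (Nat.choose (k + 2) 2 - 3))
        (∑ j ∈ range (Nat.choose (k + 2) 2 + Nat.choose (d + 2) 2),
          (-1 : MvPolynomial (Fin 2) ℤ) ^ j *
            (C (d : ℤ) * X 0 + X 1 + C ((k : ℤ) * ((d : ℤ) - (k : ℤ))) * X 0 ^ 2 +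
              C (k : ℤ) * X 0 * X 1) ^ j) : ℤ) : ℚ)
      = ((d : ℚ) - k) ^ 2 / 2 * (Nat.choose (k + 2) 2 : ℚ) ^ 2
        - ((d : ℚ) - k) * (3 * (d : ℚ) - 5 * k) / 2 * (Nat.choose (k + 2) 2 : ℚ)
        + ((d : ℚ) - 2 * k) ^ 2 :=
  dd_k_veronese_P2_BW_general d k h1
end

section
/- For a k-regular embedding f: S → ℙ^n of a nonsingular projective surface with total Chern class 1 + c₁ + c₂ and hyperplane class L, work in the graded ring ℚ[L,c₁,c₂]/(all elements of degree > 2) and define c(P^k) by the recursion c(P^k) = c(Sym^k Ω ⊗ O(1))·c(P^{k-1}) with base case c(P^1) = 1 + 3L − c₁ + 3L² − 2c₁L + c₂, where c₁(Sym^k Ω) = −binom(k+1,2)c₁, c₂(Sym^k Ω) = ((3k+2)/4)binom(k+1,3)c₁² + binom(k+2,3)c₂, and c_i(F⊗O(1)) = Σ_j binom(rank F − j, i−j) c_j(F) L^{i−j} with rank Sym^k Ω = k+1; then the total Chern class of the k-th jet bundle satisfies c₁(P^k) = binom(k+2,2)·L − binom(k+2,3)·c₁ and c₂(P^k) = (1/2)binom(k+1,2)binom(k+3,2)·L²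 − 2k·binom(k+3,4)·c₁L + (1/2)binom(k+1,3)binom(k+3,3)·c₁² + binom(k+3,4)·c₂. -/
open MvPolynomial

lemma ch2 (n : ℕ) : ((n + 1).choose 2 : ℚ) = (n + 1) * n / 2 := by
  induction n with
  | zero => norm_num
  | succ m ih =>
    rw [show m + 1 + 1 = (m + 1) + 1 from rfl, Nat.choose_succ_succ]
    push_cast
    rw [ih]
    simp [Nat.choose_one_right]
    push_cast
    ring

lemma ch3 (n : ℕ) : ((n + 2).choose 3 : ℚ) = (n + 2) * (n + 1) * n / 6 := by
  induction n with
  | zero => norm_num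
  | succ m ih =>
    rw [show m + 1 + 2 = (m + 2) + 1 from rfl, Nat.choose_succ_succ]
    push_cast
    rw [ih, ch2 (m+1)]
    push_cast
    ring

lemma ch4 (n : ℕ) : ((n + 3).choose 4 : ℚ) = (n + 3) * (n + 2) * (n + 1) * n / 24 := by
  induction n with
  | zero => norm_num
  | succ m ih =>
    rw [show m + 1 + 3 = (m + 3) + 1 from rfl, Nat.choose_succ_succ]
    push_cast
    rw [ih, ch3 (m+1)]
    push_cast
    ring

/-- Closed forms for `c₁(P^k)` and `c₂(P^k)` of the jet bundles of a `k`-regular surface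
embedding. Modeling the graded ring `ℚ[L,c₁,c₂]` with `L = X 0`, `c₁ = X 1`, `c₂ = X 2`,
the recursion `c(P^k) = c(Sym^k Ω ⊗ O(1))·c(P^{k-1})` with base
`c(P^1) = 1 + 3L − c₁ + 3L² − 2c₁L + c₂` yields
`c₁(P^k) = binom(k+2,2) L − binom(k+2,3) c₁` and
`c₂(P^k) = ½binom(k+1,2)binom(k+3,2) L² − 2k binom(k+3,4) c₁L
  + ½binom(k+1,3)binom(k+3,3) c₁² + binom(k+3,4) c₂`. -/
theorem jet_bundle_chern_surface
    (a b : ℕ → MvPolynomial (Fin 3) ℚ)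
    (ha1 : a 1 = 3 * X 0 - X 1)
    (hb1 : b 1 = 3 * X 0 ^ 2 - 2 * X 1 * X 0 + X 2)
    (ha : ∀ k, 2 ≤ k → a k = a (k - 1) +
      (C ((k : ℚ) + 1) * X 0 - C (Nat.choose (k + 1) 2 : ℚ) * X 1))
    (hb : ∀ k, 2 ≤ k → b k = b (k - 1)
      + a (k - 1) * (C ((k : ℚ) + 1) * X 0 - C (Nat.choose (k + 1) 2 : ℚ) * X 1)
      + (C (Nat.choose (k + 1) 2 : ℚ) * X 0 ^ 2
         - C ((k : ℚ) * (Nat.choose (k + 1) 2 : ℚ)) * X 1 * X 0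
         + C ((3 * (k : ℚ) + 2) / 4 * (Nat.choose (k + 1) 3 : ℚ)) * X 1 ^ 2
         + C (Nat.choose (k + 2) 3 : ℚ) * X 2)) :
    ∀ k, 1 ≤ k →
      a k = C (Nat.choose (k + 2) 2 : ℚ) * X 0 - C (Nat.choose (k + 2) 3 : ℚ) * X 1 ∧
      b k = C ((1 / 2 : ℚ) * (Nat.choose (k + 1) 2 : ℚ) * (Nat.choose (k + 3) 2 : ℚ)) * X 0 ^ 2
        - C (2 * (k : ℚ) * (Nat.choose (k + 3) 4 : ℚ)) * X 1 * X 0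
        + C ((1 / 2 : ℚ) * (Nat.choose (k + 1) 3 : ℚ) * (Nat.choose (k + 3) 3 : ℚ)) * X 1 ^ 2
        + C (Nat.choose (k + 3) 4 : ℚ) * X 2 := by
  have key : ∀ n : ℕ,
      a (n+1) = C (Nat.choose ((n+1) + 2) 2 : ℚ) * X 0 - C (Nat.choose ((n+1) + 2) 3 : ℚ) * X 1 ∧
      b (n+1) = C ((1 / 2 : ℚ) * (Nat.choose ((n+1) + 1) 2 : ℚ) * (Nat.choose ((n+1) + 3) 2 : ℚ)) * X 0 ^ 2
        - C (2 * ((n+1 : ℕ) : ℚ) * (Nat.choose ((n+1) + 3) 4 : ℚ)) * X 1 * X 0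
        + C ((1 / 2 : ℚ) * (Nat.choose ((n+1) + 1) 3 : ℚ) * (Nat.choose ((n+1) + 3) 3 : ℚ)) * X 1 ^ 2
        + C (Nat.choose ((n+1) + 3) 4 : ℚ) * X 2 := by
    intro n
    induction n with
    | zero =>
      constructor
      · rw [ha1]; norm_num [map_ofNat]
      · rw [hb1]; norm_num [map_ofNat]
        rw [show (Nat.choose 4 2) = 6 from rfl, Nat.cast_ofNat,
          ← map_ofNat (C : ℚ →+* MvPolynomial (Fin 3) ℚ) 6, ← C_mul,
          ← map_ofNat (C : ℚ →+* MvPolynomial (Fin 3) ℚ) 3]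
        norm_num
    | succ m ih =>
      obtain ⟨iha, ihb⟩ := ih
      have h2 : 2 ≤ m + 1 + 1 := by omega
      have hsub : m + 1 + 1 - 1 = m + 1 := rfl
      have w1 : ((Nat.choose (m+1+1+1) 2 : ℕ) : ℚ) = ((m:ℚ)+3)*((m:ℚ)+2)/2 := by
        rw [show m+1+1+1 = (m+2)+1 by omega, ch2 (m+2)]; all_goals (push_cast; ring)
      have w2 : ((Nat.choose (m+1+1+3) 2 : ℕ) : ℚ) = ((m:ℚ)+5)*((m:ℚ)+4)/2 := by
        rw [show m+1+1+3 = (m+4)+1 by omega, ch2 (m+4)]; all_goals (push_cast; ring)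
      have w3 : ((Nat.choose (m+1+1) 2 : ℕ) : ℚ) = ((m:ℚ)+2)*((m:ℚ)+1)/2 := by
        rw [show m+1+1 = (m+1)+1 by omega, ch2 (m+1)]; all_goals (push_cast; ring)
      have w4 : ((Nat.choose (m+1+3) 2 : ℕ) : ℚ) = ((m:ℚ)+4)*((m:ℚ)+3)/2 := by
        rw [show m+1+3 = (m+3)+1 by omega, ch2 (m+3)]; all_goals (push_cast; ring)
      have w5 : ((Nat.choose (m+1+2) 2 : ℕ) : ℚ) = ((m:ℚ)+3)*((m:ℚ)+2)/2 := by
        rw [show m+1+2 = (m+2)+1 by omega, ch2 (m+2)]; all_goals (push_cast; ring)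
      have w6 : ((Nat.choose (m+1+1+2) 2 : ℕ) : ℚ) = ((m:ℚ)+4)*((m:ℚ)+3)/2 := by
        rw [show m+1+1+2 = (m+3)+1 by omega, ch2 (m+3)]; all_goals (push_cast; ring)
      have w7 : ((Nat.choose (m+1+2) 3 : ℕ) : ℚ) = ((m:ℚ)+3)*((m:ℚ)+2)*((m:ℚ)+1)/6 := by
        rw [show m+1+2 = (m+1)+2 by omega, ch3 (m+1)]; all_goals (push_cast; ring)
      have w8 : ((Nat.choose (m+1+1+2) 3 : ℕ) : ℚ) = ((m:ℚ)+4)*((m:ℚ)+3)*((m:ℚ)+2)/6 := by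
        rw [show m+1+1+2 = (m+2)+2 by omega, ch3 (m+2)]; all_goals (push_cast; ring)
      have w9 : ((Nat.choose (m+1+1+1) 3 : ℕ) : ℚ) = ((m:ℚ)+3)*((m:ℚ)+2)*((m:ℚ)+1)/6 := by
        rw [show m+1+1+1 = (m+1)+2 by omega, ch3 (m+1)]; all_goals (push_cast; ring)
      have w10 : ((Nat.choose (m+1+1+3) 3 : ℕ) : ℚ) = ((m:ℚ)+5)*((m:ℚ)+4)*((m:ℚ)+3)/6 := by
        rw [show m+1+1+3 = (m+3)+2 by omega, ch3 (m+3)]; all_goals (push_cast; ring)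
      have w11 : ((Nat.choose (m+1+1) 3 : ℕ) : ℚ) = ((m:ℚ)+2)*((m:ℚ)+1)*(m:ℚ)/6 := by
        rw [show m+1+1 = m+2 by omega, ch3 m]; all_goals (push_cast; ring)
      have w12 : ((Nat.choose (m+1+3) 3 : ℕ) : ℚ) = ((m:ℚ)+4)*((m:ℚ)+3)*((m:ℚ)+2)/6 := by
        rw [show m+1+3 = (m+2)+2 by omega, ch3 (m+2)]; all_goals (push_cast; ring)
      have w13 : ((Nat.choose (m+1+3) 4 : ℕ) : ℚ) = ((m:ℚ)+4)*((m:ℚ)+3)*((m:ℚ)+2)*((m:ℚ)+1)/24 := by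
        rw [show m+1+3 = (m+1)+3 by omega, ch4 (m+1)]; all_goals (push_cast; ring)
      have w14 : ((Nat.choose (m+1+1+3) 4 : ℕ) : ℚ) = ((m:ℚ)+5)*((m:ℚ)+4)*((m:ℚ)+3)*((m:ℚ)+2)/24 := by
        rw [show m+1+1+3 = (m+2)+3 by omega, ch4 (m+2)]; all_goals (push_cast; ring)
      have hA : ((Nat.choose (m+1+1+2) 2 : ℕ) : ℚ)
          = ((Nat.choose (m+1+2) 2 : ℕ) : ℚ) + (((m+1+1 : ℕ) : ℚ) + 1) := by
        simp only [w5, w6]; all_goals (push_cast; ring)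
      have hB : ((Nat.choose (m+1+1+2) 3 : ℕ) : ℚ)
          = ((Nat.choose (m+1+2) 3 : ℕ) : ℚ) + ((Nat.choose (m+1+1+1) 2 : ℕ) : ℚ) := by
        simp only [w7, w8, w1]; all_goals (push_cast; ring)
      have hP : ((1/2 : ℚ) * ((Nat.choose (m+1+1+1) 2 : ℕ) : ℚ) * ((Nat.choose (m+1+1+3) 2 : ℕ) : ℚ))
          = (1/2 : ℚ) * ((Nat.choose (m+1+1) 2 : ℕ) : ℚ) * ((Nat.choose (m+1+3) 2 : ℕ) : ℚ)
            + ((Nat.choose (m+1+2) 2 : ℕ) : ℚ) * (((m+1+1 : ℕ) : ℚ) + 1)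
            + ((Nat.choose (m+1+1+1) 2 : ℕ) : ℚ) := by
        simp only [w1, w2, w3, w4, w5]; all_goals (push_cast; ring)
      have hQ : (2 * ((m+1+1 : ℕ) : ℚ) * ((Nat.choose (m+1+1+3) 4 : ℕ) : ℚ))
          = 2 * ((m+1 : ℕ) : ℚ) * ((Nat.choose (m+1+3) 4 : ℕ) : ℚ)
            + (((Nat.choose (m+1+2) 2 : ℕ) : ℚ) * ((Nat.choose (m+1+1+1) 2 : ℕ) : ℚ)
               + ((Nat.choose (m+1+2) 3 : ℕ) : ℚ) * (((m+1+1 : ℕ) : ℚ) + 1))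
            + ((m+1+1 : ℕ) : ℚ) * ((Nat.choose (m+1+1+1) 2 : ℕ) : ℚ) := by
        simp only [w1, w5, w7, w13, w14]; all_goals (push_cast; ring)
      have hR : ((1/2 : ℚ) * ((Nat.choose (m+1+1+1) 3 : ℕ) : ℚ) * ((Nat.choose (m+1+1+3) 3 : ℕ) : ℚ))
          = (1/2 : ℚ) * ((Nat.choose (m+1+1) 3 : ℕ) : ℚ) * ((Nat.choose (m+1+3) 3 : ℕ) : ℚ)
            + ((Nat.choose (m+1+2) 3 : ℕ) : ℚ) * ((Nat.choose (m+1+1+1) 2 : ℕ) : ℚ)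
            + (3 * ((m+1+1 : ℕ) : ℚ) + 2) / 4 * ((Nat.choose (m+1+1+1) 3 : ℕ) : ℚ) := by
        simp only [w1, w7, w9, w10, w11, w12]; all_goals (push_cast; ring)
      have hS : ((Nat.choose (m+1+1+3) 4 : ℕ) : ℚ)
          = ((Nat.choose (m+1+3) 4 : ℕ) : ℚ) + ((Nat.choose (m+1+1+2) 3 : ℕ) : ℚ) := by
        simp only [w8, w13, w14]; all_goals (push_cast; ring)
      constructor
      · rw [ha (m+1+1) h2, hsub, iha, hA, hB]
        simp only [C_add, C_mul, map_one]
        ring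
      · rw [hb (m+1+1) h2, hsub, iha, ihb, hP, hQ, hR, hS]
        simp only [C_add, C_mul, map_one, map_ofNat]
        ring
  intro k hk
  obtain ⟨n, rfl⟩ : ∃ n, k = n + 1 := ⟨k - 1, by omega⟩
  exact key n
end
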